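/- arXiv:1402.2119 — 2 statements merged into one kernel-verified Lean document; each statement's English description precedes it below -/
import Mathlib

section
/- For every n ≥ 4 there exists a minimally two-connected graph on n vertices with exactly 2n−4 edges. -/
/-!
The witness is `K_{2,n-2}`. Deleting a vertex from a complete bipartite graph whose two sides
have at least two vertices each leaves a complete bipartite graph with both sides nonempty, which
is connected. Deleting an edge `xy` with `x` one of the two hubs leaves `y` with the other hub as
its only neighbour, whereas every vertex of a two-connected graph has two neighbours: deleting
the single neighbour of a vertex isolates it.
-/

open scoped Classical

/-- A graph is two-connected if it has at least 3 vertices, is connected, and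
remains connected after deleting any single vertex (and its incident edges). -/
def TwoConnected {V : Type*} [Fintype V] (G : SimpleGraph V) : Prop :=
  3 ≤ Fintype.card V ∧ G.Connected ∧ ∀ v : V, (G.induce ({v}ᶜ : Set V)).Connected

theorem TwoConnected.neighborSet_nontrivial {V : Type*} [Fintype V] {G : SimpleGraph V}
    (hG : TwoConnected G) (v : V) : (G.neighborSet v).Nontrivial := by
  obtain ⟨hcard, hconn, hdel⟩ := hG
  have : Nontrivial V := Fintype.one_lt_card_iff_nontrivial.mp (by omega)
  obtain ⟨w, hvw⟩ := hconn.preconnected.exists_adj_of_nontrivial v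
  obtain ⟨u, -, hu⟩ := Finset.exists_mem_notMem_of_card_lt_card
    ((Finset.card_le_two (a := v) (b := w)).trans_lt (by rwa [Finset.card_univ]))
  simp only [Finset.mem_insert, Finset.mem_singleton, not_or] at hu
  have : Nontrivial ({w}ᶜ : Set V) :=
    ⟨⟨v, hvw.ne⟩, ⟨u, hu.2⟩, fun h => hu.1 (congrArg Subtype.val h).symm⟩
  obtain ⟨⟨z, hzw⟩, hvz⟩ := (hdel w).preconnected.exists_adj_of_nontrivial ⟨v, hvw.ne⟩
  exact ⟨w, hvw, z, hvz, fun h => hzw h.symm⟩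

namespace SimpleGraph

variable {V : Type*} {s : Set V}

@[simp]
theorem top_between_compl_adj {v w : V} :
    ((⊤ : SimpleGraph V).between s sᶜ).Adj v w ↔ (v ∈ s ↔ w ∉ s) := by
  rw [between_adj, top_adj, Set.mem_compl_iff, Set.mem_compl_iff]
  grind

theorem connected_top_between_compl (hs : s.Nonempty) (hsc : sᶜ.Nonempty) :
    ((⊤ : SimpleGraph V).between s sᶜ).Connected := by
  obtain ⟨a, ha⟩ := hs
  obtain ⟨b, hb⟩ := hsc
  have hab : ((⊤ : SimpleGraph V).between s sᶜ).Adj a b := by simpa [ha] using hb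
  refine (connected_iff_exists_forall_reachable _).mpr ⟨a, fun x => ?_⟩
  by_cases hx : x ∈ s
  · exact hab.reachable.trans (Adj.reachable (by simpa [hx] using hb))
  · exact Adj.reachable (by simpa [ha] using hx)

theorem twoConnected_top_between_compl [Fintype V] (hs : s.Nontrivial) (hsc : sᶜ.Nontrivial) :
    TwoConnected ((⊤ : SimpleGraph V).between s sᶜ) := by
  obtain ⟨a, ha, b, hb, hab⟩ := id hs
  obtain ⟨c, hc⟩ := hsc.nonempty
  refine ⟨Fintype.two_lt_card_iff.mpr ⟨a, b, c, hab, ?_, ?_⟩,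
    connected_top_between_compl ⟨a, ha⟩ ⟨c, hc⟩, fun v => ?_⟩
  · rintro rfl; exact hc ha
  · rintro rfl; exact hc hb
  have hle : (⊤ : SimpleGraph ({v}ᶜ : Set V)).between (Subtype.val ⁻¹' s) (Subtype.val ⁻¹' s)ᶜ ≤
      ((⊤ : SimpleGraph V).between s sᶜ).induce {v}ᶜ := fun x y h => by
    simpa using h
  obtain ⟨x, hx, hxv⟩ := hs.exists_ne v
  obtain ⟨y, hy, hyv⟩ := hsc.exists_ne v
  exact (connected_top_between_compl ⟨⟨x, hxv⟩, hx⟩ ⟨⟨y, hyv⟩, hy⟩).mono hle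

theorem card_edgeSet_top_between_compl [Finite V] :
    Nat.card ((⊤ : SimpleGraph V).between s sᶜ).edgeSet = s.ncard * sᶜ.ncard := by
  have hedges : ((⊤ : SimpleGraph V).between s sᶜ).edgeSet =
      (fun p : V × V => s(p.1, p.2)) '' s ×ˢ sᶜ := by
    ext e
    induction e using Sym2.ind with
    | _ x y =>
      simp only [mem_edgeSet, top_between_compl_adj, Set.mem_image, Set.mem_prod,
        Set.mem_compl_iff, Prod.exists, Sym2.eq_iff]
      by_cases hx : x ∈ s <;> by_cases hy : y ∈ s <;> grind
  have hinj : Set.InjOn (fun p : V × V => s(p.1, p.2)) (s ×ˢ sᶜ) := by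
    rintro ⟨a, b⟩ ⟨ha, hb⟩ ⟨a', b'⟩ ⟨ha', hb'⟩ h
    simp only [Sym2.eq_iff] at h
    rcases h with ⟨rfl, rfl⟩ | ⟨rfl, rfl⟩
    · rfl
    · exact absurd ha hb'
  rw [hedges, Nat.card_coe_set_eq, hinj.ncard_image, Set.ncard_prod]

theorem neighborSet_deleteEdges_top_between_compl {x y : V} (hy : y ∉ s) :
    (((⊤ : SimpleGraph V).between s sᶜ).deleteEdges {s(x, y)}).neighborSet y = s \ {x} := by
  ext z
  simp only [mem_neighborSet, deleteEdges_adj, top_between_compl_adj, Set.mem_singleton_iff,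
    Sym2.eq_iff, Set.mem_sdiff]
  grind

theorem not_twoConnected_deleteEdges_top_between_compl [Fintype V] (hs : s.ncard ≤ 2)
    {e : Sym2 V} (he : e ∈ ((⊤ : SimpleGraph V).between s sᶜ).edgeSet) :
    ¬ TwoConnected (((⊤ : SimpleGraph V).between s sᶜ).deleteEdges {e}) := by
  suffices key : ∀ x y, x ∈ s → y ∉ s →
      ¬ TwoConnected (((⊤ : SimpleGraph V).between s sᶜ).deleteEdges {s(x, y)}) by
    induction e using Sym2.ind with
    | _ x y =>
      by_cases hx : x ∈ s
      · exact key x y hx (by simpa [hx] using he)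
      · rw [Sym2.eq_swap]
        exact key y x (by simpa [hx] using he) hx
  intro x y hx hy hG
  have hnt := hG.neighborSet_nontrivial y
  rw [neighborSet_deleteEdges_top_between_compl hy, ← Set.one_lt_ncard_iff_nontrivial,
    Set.ncard_sdiff_singleton_of_mem hx] at hnt
  omega

end SimpleGraph

open SimpleGraph

/-- For every `n ≥ 4` there is a minimally two-connected graph on `n` vertices
with exactly `2n - 4` edges. -/
theorem exists_minimally_twoConnected (n : ℕ) (hn : 4 ≤ n) :
    ∃ G : SimpleGraph (Fin n), TwoConnected G ∧
      Nat.card G.edgeSet = 2 * n - 4 ∧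
      ∀ e ∈ G.edgeSet, ¬ TwoConnected (G.deleteEdges {e}) := by
  set s : Set (Fin n) := {⟨0, by omega⟩, ⟨1, by omega⟩}
  have hs : s.ncard = 2 := Set.ncard_pair (by simp)
  have hsc : sᶜ.ncard = n - 2 := by rw [Set.ncard_compl, hs, Nat.card_fin]
  refine ⟨(⊤ : SimpleGraph (Fin n)).between s sᶜ, twoConnected_top_between_compl ?_ ?_, ?_,
    fun e he => not_twoConnected_deleteEdges_top_between_compl hs.le he⟩
  · exact Set.one_lt_ncard_iff_nontrivial.mp (by omega)
  · exact Set.one_lt_ncard_iff_nontrivial.mp (by omega)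
  · rw [card_edgeSet_top_between_compl, hs, hsc]
    omega
end

section
/- For the graphical matroid on [n]^(2) with lexicographic edge order, intersecting the Björner–Sokal matroid partition with the set of connected graphs yields: C[n] is the disjoint union over all spanning trees τ of [n] of the intervals [τ, R(τ)], where R(τ) is τ together with all its externally active edges. -/
open scoped Classical

/-- The smaller endpoint of an unordered pair. -/
def eMin {m : ℕ} (e : Sym2 (Fin m)) : Fin m :=
  Sym2.lift ⟨fun a b => min a b, fun a b => min_comm a b⟩ e

/-- The larger endpoint of an unordered pair. -/
def eMax {m : ℕ} (e : Sym2 (Fin m)) : Fin m :=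
  Sym2.lift ⟨fun a b => max a b, fun a b => max_comm a b⟩ e

/-- The lexicographic (strict) order on edges. -/
def edgeLt {m : ℕ} (e f : Sym2 (Fin m)) : Prop :=
  eMin e < eMin f ∨ (eMin e = eMin f ∧ eMax e < eMax f)

/-- The spanning subgraph `G^{>e}` of edges strictly greater than `e`. -/
def gtSubgraph {m : ℕ} (G : SimpleGraph (Fin m)) (e : Sym2 (Fin m)) :
    SimpleGraph (Fin m) where
  Adj a b := G.Adj a b ∧ edgeLt e s(a, b)
  symm := ⟨fun a b hab => by
    refine ⟨hab.1.symm, ?_⟩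
    have := hab.2
    rwa [Sym2.eq_swap] at this⟩
  loopless := ⟨fun a ha => G.loopless.irrefl a ha.1⟩

/-- An edge `e` is externally active for `τ` if the endpoints of `e` are
joined by a path using only edges of `τ` strictly greater than `e`. -/
def ExtActive {m : ℕ} (τ : SimpleGraph (Fin m)) (e : Sym2 (Fin m)) : Prop :=
  ∃ a b : Fin m, e = s(a, b) ∧ a ≠ b ∧ (gtSubgraph τ e).Reachable a b

/-- `R(τ)`: the tree `τ` together with all of its externally active edges. -/
def bjornerSokalR {m : ℕ} (τ : SimpleGraph (Fin m)) : SimpleGraph (Fin m) :=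
  τ ⊔ SimpleGraph.fromEdgeSet {e | ExtActive τ e}

/-! Well-founded induction on `G`. An acyclic `G` is its own, and only, spanning tree.
Otherwise let `e = ab` be the least edge of `G` that is not a bridge, and `τ` the tree given by
induction for `G - e`. Every edge of the `τ`-path from `a` to `b` lies on a cycle through `e`, so
it is not a bridge of `G` and is therefore larger than `e`: `e` is externally active for `τ`.
Conversely no tree `τ'` with `τ' ≤ G ≤ R(τ')` contains `e`, so `τ'` is a tree for `G - e`. -/

open SimpleGraph

section EdgeOrder

variable {m : ℕ}

def edgeKey (e : Sym2 (Fin m)) : Lex (Fin m × Fin m) := toLex (eMin e, eMax e)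

lemma edgeLt_iff_edgeKey_lt {e f : Sym2 (Fin m)} : edgeLt e f ↔ edgeKey e < edgeKey f := by
  rw [edgeKey, edgeKey, Prod.Lex.lt_iff]
  rfl

lemma edgeKey_injective : Function.Injective (edgeKey (m := m)) := fun e f h => by
  obtain ⟨hmin, hmax⟩ := Prod.mk.inj (toLex.injective h)
  exact Sym2.inf_eq_inf_and_sup_eq_sup.1 ⟨hmin, hmax⟩

lemma edgeLt_or_edgeLt_of_ne {e f : Sym2 (Fin m)} (h : e ≠ f) : edgeLt e f ∨ edgeLt f e := by
  simp only [edgeLt_iff_edgeKey_lt]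
  exact lt_or_gt_of_ne (edgeKey_injective.ne h)

end EdgeOrder

lemma not_isBridge_of_mem_edges_of_isPath {V : Type*} {G H : SimpleGraph V} (hHG : H ≤ G)
    {a b : V} (hab : G.Adj a b) (habH : s(a, b) ∉ H.edgeSet) {p : H.Walk a b} (hp : p.IsPath)
    {f : Sym2 V} (hf : f ∈ p.edges) : ¬G.IsBridge f := by
  have hcycle : (Walk.cons hab.symm (p.mapLe hHG)).IsCycle := by
    refine Path.cons_isCycle ⟨p.mapLe hHG, hp.mapLe hHG⟩ hab.symm fun hba => habH ?_
    rw [Sym2.eq_swap]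
    exact p.edges_subset_edgeSet (by simpa [Walk.edges_mapLe_eq_edges] using hba)
  refine fun hbridge => hbridge.notMem_edges_of_isCycle hcycle ?_
  rw [Walk.edges_cons, Walk.edges_mapLe_eq_edges]
  exact List.mem_cons_of_mem _ hf

section ExternalActivity

variable {m : ℕ} {τ : SimpleGraph (Fin m)} {e f : Sym2 (Fin m)} {a b x y : Fin m}

lemma mem_edgeSet_gtSubgraph : f ∈ (gtSubgraph τ e).edgeSet ↔ f ∈ τ.edgeSet ∧ edgeLt e f := by
  induction f using Sym2.ind
  rfl

lemma gtSubgraph_le_deleteEdges (h : ¬edgeLt f e) : gtSubgraph τ f ≤ τ.deleteEdges {e} :=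
  fun _ _ hxy => deleteEdges_adj.2 ⟨hxy.1, fun hxye => h (Set.mem_singleton_iff.1 hxye ▸ hxy.2)⟩

lemma ExtActive.reachable (h : ExtActive τ s(x, y)) : (gtSubgraph τ s(x, y)).Reachable x y := by
  obtain ⟨x', y', hxy, -, hr⟩ := h
  rcases Sym2.eq_iff.1 hxy with ⟨rfl, rfl⟩ | ⟨rfl, rfl⟩
  exacts [hr, hr.symm]

lemma extActive_of_forall_edgeLt {p : τ.Walk a b} (hab : a ≠ b)
    (hp : ∀ f ∈ p.edges, edgeLt s(a, b) f) : ExtActive τ s(a, b) :=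
  ⟨a, b, rfl, hab, ⟨p.transfer _ fun f hf =>
    mem_edgeSet_gtSubgraph.2 ⟨p.edges_subset_edgeSet hf, hp f hf⟩⟩⟩

lemma fromEdgeSet_le_bjornerSokalR (he : ExtActive τ e) : fromEdgeSet {e} ≤ bjornerSokalR τ :=
  le_sup_of_le_right (fromEdgeSet_mono (Set.singleton_subset_iff.2 he))

lemma reachable_deleteEdges_of_adj_bjornerSokalR (h : (bjornerSokalR τ).Adj x y)
    (hne : s(x, y) ≠ e) (hlt : ¬edgeLt s(x, y) e) : (τ.deleteEdges {e}).Reachable x y := by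
  rcases h with hτ | hext
  · exact (deleteEdges_adj.2 ⟨hτ, hne⟩).reachable
  · exact ((fromEdgeSet_adj _).1 hext).1.reachable.mono (gtSubgraph_le_deleteEdges hlt)

end ExternalActivity

structure IsLeastNonBridge {m : ℕ} (G : SimpleGraph (Fin m)) (e : Sym2 (Fin m)) : Prop where
  mem_edgeSet : e ∈ G.edgeSet
  not_isBridge : ¬G.IsBridge e
  not_edgeLt : ∀ f ∈ G.edgeSet, ¬G.IsBridge f → ¬edgeLt f e

section LeastNonBridge

variable {m : ℕ} {τ G : SimpleGraph (Fin m)} {a b : Fin m}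

lemma exists_isLeastNonBridge (hG : ¬G.IsAcyclic) : ∃ a b, IsLeastNonBridge G s(a, b) := by
  have hne : ∃ f ∈ G.edgeSet, ¬G.IsBridge f := by
    simpa [isAcyclic_iff_forall_isBridge] using hG
  obtain ⟨⟨a, b⟩, ⟨hab, hnb⟩, hmin⟩ :=
    Set.exists_min_image {f | f ∈ G.edgeSet ∧ ¬G.IsBridge f} edgeKey (Set.toFinite _) hne
  exact ⟨a, b, hab, hnb, fun f hf hfnb =>
    edgeLt_iff_edgeKey_lt.not.2 (not_lt.2 (hmin f ⟨hf, hfnb⟩))⟩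

namespace IsLeastNonBridge

lemma reachable_deleteEdges (h : IsLeastNonBridge G s(a, b)) :
    (G.deleteEdges {s(a, b)}).Reachable a b :=
  not_not.1 h.not_isBridge

lemma extActive (h : IsLeastNonBridge G s(a, b)) (hτ : τ.Connected)
    (hτG : τ ≤ G.deleteEdges {s(a, b)}) : ExtActive τ s(a, b) := by
  have hab : G.Adj a b := h.mem_edgeSet
  have habτ : s(a, b) ∉ τ.edgeSet := fun habτ => by simpa using edgeSet_mono hτG habτ
  obtain ⟨p, hp⟩ := hτ.exists_isPath a b
  refine extActive_of_forall_edgeLt (p := p) hab.ne fun f hf => ?_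
  have hfG := edgeSet_mono hτG (p.edges_subset_edgeSet hf)
  rw [edgeSet_deleteEdges] at hfG
  have hnb := not_isBridge_of_mem_edges_of_isPath (hτG.trans (deleteEdges_le _)) hab habτ hp hf
  exact (edgeLt_or_edgeLt_of_ne (Ne.symm hfG.2)).resolve_right (h.not_edgeLt f hfG.1 hnb)

/-- The edges of a path from `a` to `b` in `G - ab` are non-bridges of `G`, hence not below `ab`;
so the one crossing the cut of `τ - ab` between `a` and `b` has its endpoints joined in `τ - ab`. -/
lemma not_adj (h : IsLeastNonBridge G s(a, b)) (hτ : τ.IsAcyclic)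
    (hGR : G ≤ bjornerSokalR τ) : ¬τ.Adj a b := by
  intro hab
  have hsep : ¬(τ.deleteEdges {s(a, b)}).Reachable a b :=
    isAcyclic_iff_forall_adj_isBridge.1 hτ hab
  obtain ⟨q, hq⟩ := h.reachable_deleteEdges.exists_isPath
  obtain ⟨d, hd, hx, hy⟩ := q.exists_boundary_dart {x | (τ.deleteEdges {s(a, b)}).Reachable a x}
    Reachable.rfl hsep
  have hdG := deleteEdges_adj.1 d.adj
  have hnb : ¬G.IsBridge s(d.fst, d.snd) := not_isBridge_of_mem_edges_of_isPath
    (deleteEdges_le _) h.mem_edgeSet (by simp) hq (List.mem_map_of_mem hd)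
  exact hy (hx.trans (reachable_deleteEdges_of_adj_bjornerSokalR (hGR hdG.1) hdG.2
    (h.not_edgeLt _ hdG.1 hnb)))

end IsLeastNonBridge

end LeastNonBridge

/-- Intersecting the Björner–Sokal matroid partition with the connected
graphs: every connected graph `G` on `[n]` lies in the Boolean interval
`[τ, R(τ)]` for exactly one spanning tree `τ`. -/
theorem connected_partition (n : ℕ) (G : SimpleGraph (Fin n)) (hG : G.Connected) :
    ∃! τ : SimpleGraph (Fin n), τ.IsTree ∧ τ ≤ G ∧ G ≤ bjornerSokalR τ := by
  induction G using WellFoundedLT.induction with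
  | _ G ih =>
  by_cases hacyclic : G.IsAcyclic
  · exact ⟨G, ⟨⟨hG, hacyclic⟩, le_rfl, le_sup_left⟩, fun τ hτ =>
      (isTree_iff_minimal_connected.1 ⟨hG, hacyclic⟩).eq_of_le hτ.1.connected hτ.2.1⟩
  obtain ⟨a, b, hleast⟩ := exists_isLeastNonBridge hacyclic
  have hlt : G.deleteEdges {s(a, b)} < G := by
    simpa [deleteEdges, ← edgeSet_ssubset_edgeSet] using hleast.mem_edgeSet
  obtain ⟨τ, ⟨hτ, hτG, hGR⟩, huniq⟩ :=
    ih _ hlt (hG.connected_delete_edge_of_not_isBridge hleast.not_isBridge)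
  refine ⟨τ, ⟨hτ, hτG.trans (deleteEdges_le _), ?_⟩, ?_⟩
  · exact ((deleteEdges_le_iff _ _).1 hGR).trans
      (sup_le (fromEdgeSet_le_bjornerSokalR (hleast.extActive hτ.connected hτG)) le_rfl)
  · rintro τ' ⟨hτ', hτ'G, hGR'⟩
    have hτ'ab : s(a, b) ∉ τ'.edgeSet := hleast.not_adj hτ'.isAcyclic hGR'
    exact huniq τ' ⟨hτ', le_sdiff.2 ⟨hτ'G, by simpa using hτ'ab⟩, (deleteEdges_le _).trans hGR'⟩
end
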